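/- If symmetric positive definite matrices L and A on ℝⁿ satisfy (Ax,x) ≤ (1/τ)(Lx,x) for all x, then the smoothing operator I − τL⁻¹A is nonnegative with respect to the A-inner product, i.e., (τ L⁻¹ A x, x)_A ≤ (x,x)_A for all x, where (x,y)_A = (Ax,y). -/

import Mathlib

open Matrix

lemma Matrix.PosSemidef.sq_dotProduct_mulVec_le {ι : Type*} [Fintype ι] {A : Matrix ι ι ℝ}
    (hA : A.PosSemidef) (x y : ι → ℝ) :
    (x ⬝ᵥ A *ᵥ y) ^ 2 ≤ (x ⬝ᵥ A *ᵥ x) * (y ⬝ᵥ A *ᵥ y) := by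
  let := A.toSeminormedAddCommGroup hA
  let := A.toInnerProductSpace hA
  have := real_inner_mul_inner_self_le x y
  change ((A *ᵥ y) ⬝ᵥ star x) * ((A *ᵥ y) ⬝ᵥ star x) ≤
    ((A *ᵥ x) ⬝ᵥ star x) * ((A *ᵥ y) ⬝ᵥ star y) at this
  simpa [sq, dotProduct_comm] using this

lemma mul_le_of_sq_le_mul_of_mul_le {a b c τ : ℝ} (ha : 0 ≤ a) (hc : 0 ≤ c) (hτ : 0 ≤ τ)
    (hcs : c ^ 2 ≤ a * b) (hb : τ * b ≤ c) : τ * c ≤ a := by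
  rcases hc.eq_or_lt with rfl | hc
  · simpa using ha
  · refine le_of_mul_le_mul_right ?_ hc
    calc τ * c * c ≤ a * (τ * b) := by nlinarith
      _ ≤ a * c := mul_le_mul_of_nonneg_left hb ha

/- With `y = L⁻¹Ax` and `c = (Ax, y) = (Ly, y)`, Cauchy–Schwarz in the `A`-inner product gives
`c² = (x, y)_A² ≤ (x, x)_A (y, y)_A`, and the hypothesis at `y` gives `τ (y, y)_A ≤ c`;
together `τ c² ≤ (x, x)_A c`. -/
/-- If SPD matrices `L` and `A` on `ℝⁿ` satisfy `(Ax,x) ≤ (1/τ)(Lx,x)`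
for all `x`, then the smoother `I − τL⁻¹A` is nonnegative in the `A`-inner product:
`(τL⁻¹Ax, x)_A = τ·(Ax)ᵀL⁻¹(Ax) ≤ (x,x)_A = xᵀAx` for all `x`. -/
theorem stmt2 {n : ℕ} (A L : Matrix (Fin n) (Fin n) ℝ) (τ : ℝ) (hτ : 0 < τ)
    (hA : A.PosDef) (hL : L.PosDef)
    (h : ∀ x : Fin n → ℝ, x ⬝ᵥ A *ᵥ x ≤ (1 / τ) * (x ⬝ᵥ L *ᵥ x)) :
    ∀ x : Fin n → ℝ, τ * ((A *ᵥ x) ⬝ᵥ L⁻¹ *ᵥ (A *ᵥ x)) ≤ x ⬝ᵥ A *ᵥ x := by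
  intro x
  set y := L⁻¹ *ᵥ (A *ᵥ x)
  have hLy : L *ᵥ y = A *ᵥ x := by
    rw [mulVec_mulVec, mul_nonsing_inv _ ((isUnit_iff_isUnit_det L).mp hL.isUnit), one_mulVec]
  have hxAy : x ⬝ᵥ A *ᵥ y = (A *ᵥ x) ⬝ᵥ y := by
    rw [dotProduct_mulVec, ← mulVec_transpose, (isHermitian_iff_isSymm.mp hA.isHermitian).eq]
  have hyLy : y ⬝ᵥ L *ᵥ y = (A *ᵥ x) ⬝ᵥ y := by rw [hLy, dotProduct_comm]
  have hyAy : τ * (y ⬝ᵥ A *ᵥ y) ≤ (A *ᵥ x) ⬝ᵥ y := by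
    have := h y
    rwa [hyLy, one_div, ← div_eq_inv_mul, le_div_iff₀' hτ] at this
  exact mul_le_of_sq_le_mul_of_mul_le (hA.posSemidef.dotProduct_mulVec_nonneg x)
    (hyLy ▸ hL.posSemidef.dotProduct_mulVec_nonneg y) hτ.le
    (hxAy ▸ hA.posSemidef.sq_dotProduct_mulVec_le x y) hyAy
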